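/- The function R_a(τ) = (1-τ)α/(1-τα) + (β/(1-τα) + cτα(1-α-β)/(1-τα))·(τα/(β+τα)), viewed on τ ∈ [0,1], is continuous, equals α at τ = 0, and has strictly positive derivative at τ = 0 when β > 0 and α > 0 and α+β < 1; hence R_a attains a value strictly greater than α for some τ ∈ (0,1). -/

import Mathlib

open Set Filter Topology

theorem HasDerivAt.exists_mem_Ioo_lt_of_pos {f : ℝ → ℝ} {f' a b : ℝ} (hf : HasDerivAt f f' a)
    (hf' : 0 < f') (hab : a < b) : ∃ x ∈ Ioo a b, f a < f x := by
  have hslope : ∀ᶠ x in 𝓝[>] a, 0 < slope f a x :=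
    ((hasDerivAt_iff_tendsto_slope.mp hf).mono_left
      (nhdsWithin_mono a fun _ hx => ne_of_gt hx)).eventually (eventually_gt_nhds hf')
  obtain ⟨x, hx, hxab⟩ := (hslope.and (Ioo_mem_nhdsGT hab)).exists
  rw [slope_def_field, div_pos_iff_of_pos_right (sub_pos.mpr hxab.1), sub_pos] at hx
  exact ⟨x, hxab, hx⟩

noncomputable def fawReward (α β c τ : ℝ) : ℝ :=
  (1 - τ) * α / (1 - τ * α)
    + (β / (1 - τ * α) + c * (τ * α) * (1 - α - β) / (1 - τ * α)) * (τ * α / (β + τ * α))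

section fawReward

variable {α β c : ℝ}

theorem fawReward_continuousOn (hα0 : 0 ≤ α) (hα1 : α < 1) (hβ : 0 < β) :
    ContinuousOn (fawReward α β c) (Icc 0 1) := by
  have h₁ : ∀ τ ∈ Icc (0 : ℝ) 1, 1 - τ * α ≠ 0 := fun τ hτ => by
    nlinarith [mul_le_mul_of_nonneg_right hτ.2 hα0]
  have h₂ : ∀ τ ∈ Icc (0 : ℝ) 1, β + τ * α ≠ 0 := fun τ hτ => by
    nlinarith [mul_nonneg hτ.1 hα0]
  unfold fawReward
  refine .add (.div (by fun_prop) (by fun_prop) h₁) (.mul (.add ?_ ?_) ?_) <;>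
    exact .div (by fun_prop) (by fun_prop) ‹_›

theorem fawReward_zero (α β c : ℝ) : fawReward α β c 0 = α := by
  simp [fawReward]

/-- The first summand contributes `α² - α` and `β / (1 - τα) · τα / (β + τα)` contributes `α`;
the `c`-term vanishes to second order at `τ = 0`. -/
theorem hasDerivAt_fawReward_zero (hβ : β ≠ 0) : HasDerivAt (fawReward α β c) (α ^ 2) 0 := by
  have hτα : HasDerivAt (fun τ : ℝ => τ * α) α 0 := by
    simpa using (hasDerivAt_id (0 : ℝ)).mul_const α
  have hden : HasDerivAt (fun τ : ℝ => 1 - τ * α) (-α) 0 := hτα.const_sub 1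
  have hden0 : (1 : ℝ) - 0 * α ≠ 0 := by simp
  have hA := (((hasDerivAt_id (0 : ℝ)).const_sub 1).mul_const α).div hden hden0
  have hB := ((hasDerivAt_const (0 : ℝ) β).div hden hden0).add
    (((hτα.const_mul c).mul_const (1 - α - β)).div hden hden0)
  have hC := hτα.div (hτα.const_add β) (by simpa using hβ)
  refine (hA.add (hB.mul hC)).congr_deriv ?_
  simp only [Pi.div_apply, Pi.add_apply, id, zero_mul, add_zero, sub_zero, mul_one, div_one,
    zero_div]
  field_simp
  ring

end fawReward

theorem faw_reward_continuity_and_profit_general (α β c : ℝ)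
    (hα0 : 0 < α) (hα1 : α < 1) (hβ : 0 < β) :
    (ContinuousOn (fun τ : ℝ =>
        (1 - τ) * α / (1 - τ * α)
          + (β / (1 - τ * α) + c * (τ * α) * (1 - α - β) / (1 - τ * α)) * (τ * α / (β + τ * α)))
      (Set.Icc (0 : ℝ) 1))
    ∧ ((1 - (0 : ℝ)) * α / (1 - 0 * α)
        + (β / (1 - 0 * α) + c * (0 * α) * (1 - α - β) / (1 - 0 * α)) * (0 * α / (β + 0 * α))
        = α)
    ∧ (0 < deriv (fun τ : ℝ =>
        (1 - τ) * α / (1 - τ * α)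
          + (β / (1 - τ * α) + c * (τ * α) * (1 - α - β) / (1 - τ * α)) * (τ * α / (β + τ * α))) 0)
    ∧ (∃ τ ∈ Set.Ioo (0 : ℝ) 1,
        α < (1 - τ) * α / (1 - τ * α)
          + (β / (1 - τ * α) + c * (τ * α) * (1 - α - β) / (1 - τ * α)) * (τ * α / (β + τ * α))) := by
  have hR := hasDerivAt_fawReward_zero (α := α) (c := c) hβ.ne'
  have hR' : 0 < α ^ 2 := by positivity
  refine ⟨fawReward_continuousOn hα0.le hα1 hβ, fawReward_zero α β c, ?_, ?_⟩
  · exact hR.deriv ▸ hR'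
  · have := hR.exists_mem_Ioo_lt_of_pos hR' zero_lt_one
    rwa [fawReward_zero] at this

theorem faw_reward_continuity_and_profit (α β c : ℝ)
    (hα0 : 0 < α) (hα1 : α < 1) (hβ : 0 < β) (hαβ : α + β < 1)
    (hc0 : 0 ≤ c) (hc1 : c ≤ 1) :
    (ContinuousOn (fun τ : ℝ =>
        (1 - τ) * α / (1 - τ * α)
          + (β / (1 - τ * α) + c * (τ * α) * (1 - α - β) / (1 - τ * α)) * (τ * α / (β + τ * α)))
      (Set.Icc (0 : ℝ) 1))
    ∧ ((1 - (0 : ℝ)) * α / (1 - 0 * α)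
        + (β / (1 - 0 * α) + c * (0 * α) * (1 - α - β) / (1 - 0 * α)) * (0 * α / (β + 0 * α))
        = α)
    ∧ (0 < deriv (fun τ : ℝ =>
        (1 - τ) * α / (1 - τ * α)
          + (β / (1 - τ * α) + c * (τ * α) * (1 - α - β) / (1 - τ * α)) * (τ * α / (β + τ * α))) 0)
    ∧ (∃ τ ∈ Set.Ioo (0 : ℝ) 1,
        α < (1 - τ) * α / (1 - τ * α)
          + (β / (1 - τ * α) + c * (τ * α) * (1 - α - β) / (1 - τ * α)) * (τ * α / (β + τ * α))) :=
  faw_reward_continuity_and_profit_general α β c hα0 hα1 hβ
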